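/- For a nontrivial idempotent bounded linear operator T on a Hilbert space H (T^2 = T, T ≠ 0, T ≠ I), the operator norms satisfy ‖I - T‖ = ‖T‖. -/

import Mathlib

/-!
Write `x = m + n` with `m = P x` in the range and `n = x - P x` in the kernel of the idempotent `P`.
Since `P (m + t n) = m`, we get `‖m‖ ≤ ‖P‖ ‖m + t n‖` for every real `t`; minimising over `t`, this
says `‖m‖² ‖n‖² ≤ ‖P‖² (‖m‖² ‖n‖² - ⟪m, n⟫²)`. The Gram determinant on the right is symmetric in
`m` and `n`, so the same argument run backwards gives `‖n‖ ≤ ‖P‖ ‖n + m‖ = ‖P‖ ‖x‖`, i.e.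
`‖1 - P‖ ≤ ‖P‖`. Applying this to the idempotent `1 - P` gives the reverse inequality.
-/

open scoped RealInnerProductSpace

lemma IsIdempotentElem.one_le_norm {R : Type*} [NonUnitalNormedRing R] {a : R}
    (ha : IsIdempotentElem a) (h0 : a ≠ 0) : 1 ≤ ‖a‖ := by
  have : ‖a‖ ≤ ‖a‖ * ‖a‖ := by simpa only [ha.eq] using norm_mul_le a a
  exact (le_mul_iff_one_le_left (norm_pos_iff.mpr h0)).mp this

section Gram

variable {E : Type*} [NormedAddCommGroup E] [InnerProductSpace ℝ E]

lemma norm_sq_mul_norm_sq_sub_inner_sq_le (u v : E) (s : ℝ) :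
    ‖u‖ ^ 2 * ‖v‖ ^ 2 - ⟪u, v⟫ ^ 2 ≤ ‖u‖ ^ 2 * ‖v + s • u‖ ^ 2 := by
  rw [norm_add_sq_real, inner_smul_right, norm_smul, Real.norm_eq_abs, mul_pow, sq_abs,
    real_inner_comm u v]
  nlinarith [sq_nonneg (s * ‖u‖ ^ 2 + ⟪u, v⟫)]

-- Also true at `v = 0`, where the coefficient is the junk value `x / 0 = 0`.
lemma norm_sq_mul_norm_sub_smul_sq_eq (u v : E) :
    ‖v‖ ^ 2 * ‖u - (⟪u, v⟫ / ‖v‖ ^ 2) • v‖ ^ 2 = ‖u‖ ^ 2 * ‖v‖ ^ 2 - ⟪u, v⟫ ^ 2 := by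
  rcases eq_or_ne v 0 with rfl | hv
  · simp
  have hv2 : ‖v‖ ^ 2 ≠ 0 := by positivity
  rw [norm_sub_sq_real, inner_smul_right, norm_smul, Real.norm_eq_abs, mul_pow, sq_abs]
  field_simp
  ring

lemma norm_le_mul_norm_add_smul_of_forall {u v : E} {c : ℝ} (hc : 1 ≤ c)
    (h : ∀ t : ℝ, ‖u‖ ≤ c * ‖u + t • v‖) (s : ℝ) : ‖v‖ ≤ c * ‖v + s • u‖ := by
  rcases eq_or_ne u 0 with rfl | hu
  · simpa using le_mul_of_one_le_left (norm_nonneg v) hc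
  set t := ⟪u, v⟫ / ‖v‖ ^ 2
  have hmin : ‖u‖ ^ 2 ≤ c ^ 2 * ‖u - t • v‖ ^ 2 := by
    rw [← mul_pow]
    gcongr
    simpa [neg_smul, ← sub_eq_add_neg] using h (-t)
  have key : ‖u‖ ^ 2 * ‖v‖ ^ 2 ≤ ‖u‖ ^ 2 * (c * ‖v + s • u‖) ^ 2 :=
    calc ‖u‖ ^ 2 * ‖v‖ ^ 2 ≤ c ^ 2 * ‖u - t • v‖ ^ 2 * ‖v‖ ^ 2 := by gcongr
      _ = c ^ 2 * (‖u‖ ^ 2 * ‖v‖ ^ 2 - ⟪u, v⟫ ^ 2) := by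
          rw [← norm_sq_mul_norm_sub_smul_sq_eq]; ring
      _ ≤ c ^ 2 * (‖u‖ ^ 2 * ‖v + s • u‖ ^ 2) := by
          gcongr
          exact norm_sq_mul_norm_sq_sub_inner_sq_le u v s
      _ = ‖u‖ ^ 2 * (c * ‖v + s • u‖) ^ 2 := by ring
  have hu2 : 0 < ‖u‖ ^ 2 := by positivity
  exact (pow_le_pow_iff_left₀ (norm_nonneg v) (by positivity) two_ne_zero).mp
    (le_of_mul_le_mul_left key hu2)

end Gram

namespace IsIdempotentElem

variable {E : Type*} [NormedAddCommGroup E] [InnerProductSpace ℝ E]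
  {P : E →L[ℝ] E}

lemma norm_sub_apply_le (hP : IsIdempotentElem P) (h0 : P ≠ 0) (x : E) :
    ‖x - P x‖ ≤ ‖P‖ * ‖x‖ := by
  have hPP (y : E) : P (P y) = P y := DFunLike.congr_fun hP y
  have hrange (t : ℝ) : ‖P x‖ ≤ ‖P‖ * ‖P x + t • (x - P x)‖ := by
    simpa [hPP] using P.le_opNorm (P x + t • (x - P x))
  simpa using norm_le_mul_norm_add_smul_of_forall (hP.one_le_norm h0) hrange 1

lemma norm_one_sub_le (hP : IsIdempotentElem P) (h0 : P ≠ 0) : ‖1 - P‖ ≤ ‖P‖ :=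
  (1 - P).opNorm_le_bound (norm_nonneg P) fun x => by simpa using hP.norm_sub_apply_le h0 x

end IsIdempotentElem

theorem norm_id_sub_projection_general {H : Type*} [NormedAddCommGroup H]
    [InnerProductSpace ℝ H]
    (T : H →L[ℝ] H) (hidem : T.comp T = T)
    (h0 : T ≠ 0) (h1 : T ≠ ContinuousLinearMap.id ℝ H) :
    ‖ContinuousLinearMap.id ℝ H - T‖ = ‖T‖ := by
  have hT : IsIdempotentElem T := hidem
  rw [← ContinuousLinearMap.one_def] at h1 ⊢
  refine le_antisymm (hT.norm_one_sub_le h0) ?_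
  simpa using hT.one_sub.norm_one_sub_le (sub_ne_zero.mpr h1.symm)

theorem norm_id_sub_projection {H : Type*} [NormedAddCommGroup H]
    [InnerProductSpace ℝ H] [CompleteSpace H]
    (T : H →L[ℝ] H) (hidem : T.comp T = T)
    (h0 : T ≠ 0) (h1 : T ≠ ContinuousLinearMap.id ℝ H) :
    ‖ContinuousLinearMap.id ℝ H - T‖ = ‖T‖ :=
  norm_id_sub_projection_general T hidem h0 h1
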